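/- Let n ≥ 1, let π be a 132-avoiding permutation of {1,…,n} with π(k) = n, and let π₁ = (π(1),…,π(k−1)), π₂ = (π(k+1),…,π(n)). Then |123(π)| = |123(π₁)| + |123(π₂)| + |12(π₁)|; that is, the number of (123) patterns of π equals the number of (123) patterns with all three indices less than k, plus the number with all three indices greater than k, plus the number of (12) patterns among indices less than k. -/
import Mathlib


/-- `Avoids132 a` says the finite sequence `a` contains no (132) pattern,
i.e. no indices `i < j < k` with `a i < a k < a j`. -/
def Avoids132 {m : ℕ} (a : Fin m → ℕ) : Prop :=
  ∀ i j k : Fin m, i < j → j < k → ¬ (a i < a k ∧ a k < a j)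

/-- `count123 a` is the number of (123) patterns of the finite sequence `a`,
i.e. the number of triples of indices `i < j < k` with `a i < a j < a k`. -/
def count123 {m : ℕ} (a : Fin m → ℕ) : ℕ :=
  (Finset.univ.filter (fun t : Fin m × Fin m × Fin m =>
    t.1 < t.2.1 ∧ t.2.1 < t.2.2 ∧ a t.1 < a t.2.1 ∧ a t.2.1 < a t.2.2)).card

/-- `count12 a` is the number of (12) patterns of the finite sequence `a`,
i.e. the number of pairs of indices `i < j` with `a i < a j`. -/
def count12 {m : ℕ} (a : Fin m → ℕ) : ℕ :=
  (Finset.univ.filter (fun t : Fin m × Fin m =>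
    t.1 < t.2 ∧ a t.1 < a t.2)).card

/-- Let `n ≥ 1`, let `π` be a 132-avoiding permutation of `{1,…,n}`
(written as a bijective sequence `π : Fin n → ℕ`) with the value `n` at
position `k`, and let `π₁`, `π₂` be the subsequences of `π` strictly before
and strictly after position `k`.  Then
`|123(π)| = |123(π₁)| + |123(π₂)| + |12(π₁)|`. -/
theorem stmt2 (n : ℕ) (hn : 1 ≤ n) (π : Fin n → ℕ)
    (hbij : Set.BijOn π Set.univ (Set.Icc 1 n))
    (havoid : Avoids132 π)
    (k : Fin n) (hk : π k = n)
    (π₁ : Fin (k : ℕ) → ℕ)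
    (hπ₁ : π₁ = fun i : Fin (k : ℕ) => π ⟨i.1, lt_trans i.isLt k.isLt⟩)
    (π₂ : Fin (n - (k : ℕ) - 1) → ℕ)
    (hπ₂ : π₂ = fun i : Fin (n - (k : ℕ) - 1) =>
      π ⟨(k : ℕ) + 1 + i.1, by have := i.isLt; have := k.isLt; omega⟩) :
    count123 π = count123 π₁ + count123 π₂ + count12 π₁ := by
  classical
  subst hπ₁
  subst hπ₂
  have hinj : ∀ i j : Fin n, π i = π j → i = j := fun i j h =>
    hbij.injOn (Set.mem_univ i) (Set.mem_univ j) h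
  have hle : ∀ i : Fin n, π i ≤ n := fun i => (hbij.mapsTo (Set.mem_univ i)).2
  have hltn : ∀ i : Fin n, i ≠ k → π i < n := by
    intro i hi
    refine lt_of_le_of_ne (hle i) (fun h => hi (hinj i k (by rw [h, hk])))
  have hcross : ∀ i j : Fin n, i < k → k < j → π j < π i := by
    intro i j hik hkj
    have hne' : i ≠ j := ne_of_lt (lt_trans hik hkj)
    have hne : π i ≠ π j := fun h => hne' (hinj i j h)
    rcases lt_or_gt_of_ne hne with h | h
    · exact absurd ⟨h, hk ▸ hltn j (ne_of_gt hkj)⟩ (havoid i k j hik hkj)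
    · exact h
  -- the big set
  set P : Fin n × Fin n × Fin n → Prop := fun t =>
    t.1 < t.2.1 ∧ t.2.1 < t.2.2 ∧ π t.1 < π t.2.1 ∧ π t.2.1 < π t.2.2 with hP
  set S : Finset (Fin n × Fin n × Fin n) := Finset.univ.filter P with hS
  have hclass : ∀ t, P t → ((t.2.2 : ℕ) < k ∨ t.2.2 = k ∨ (k : ℕ) < t.1) := by
    rintro ⟨i, j, l⟩ ⟨h1, h2, h3, h4⟩
    dsimp only at h1 h2 h3 h4 ⊢
    by_contra hcon
    push_neg at hcon
    obtain ⟨hlk, hlne, hik⟩ := hcon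
    have hkl : (k : ℕ) < l := lt_of_le_of_ne hlk (fun h => hlne (Fin.ext h.symm))
    have h1' : (i : ℕ) < j := h1
    have h2' : (j : ℕ) < l := h2
    -- compare j with k
    rcases lt_trichotomy (j : ℕ) (k : ℕ) with hj | hj | hj
    · -- i < j < k < l
      exact absurd (hcross j l hj (by exact hkl)) (by omega)
    · have : j = k := Fin.ext hj
      subst this
      exact absurd h4 (by have := hltn l (fun h => by omega); omega)
    · rcases lt_trichotomy (i : ℕ) (k : ℕ) with hi | hi | hi
      · exact absurd (hcross i j hi hj) (by omega)
      · have : i = k := Fin.ext hi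
        subst this
        have := hltn j (fun h => by omega)
        omega
      · omega
  set S₁ := S.filter (fun t => (t.2.2 : ℕ) < k) with hS₁
  set S₂ := S.filter (fun t => t.2.2 = k) with hS₂
  set S₃ := S.filter (fun t => (k : ℕ) < t.1) with hS₃
  have hsplit : S = S₁ ∪ S₂ ∪ S₃ := by
    ext t
    simp only [hS₁, hS₂, hS₃, Finset.mem_union, Finset.mem_filter]
    constructor
    · intro ht
      have hPt : P t := (Finset.mem_filter.mp ht).2
      rcases hclass t hPt with h | h | h
      · exact Or.inl (Or.inl ⟨ht, h⟩)
      · exact Or.inl (Or.inr ⟨ht, h⟩)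
      · exact Or.inr ⟨ht, h⟩
    · rintro ((⟨h, _⟩ | ⟨h, _⟩) | ⟨h, _⟩) <;> exact h
  have hd12 : Disjoint S₁ S₂ := by
    rw [Finset.disjoint_left]
    rintro t ht ht'
    have h1 := (Finset.mem_filter.mp ht).2
    have h2 := (Finset.mem_filter.mp ht').2
    rw [h2] at h1; omega
  have hd3 : Disjoint (S₁ ∪ S₂) S₃ := by
    rw [Finset.disjoint_left]
    rintro t ht ht'
    have h3 := (Finset.mem_filter.mp ht').2
    have hPt : P t := (Finset.mem_filter.mp (Finset.mem_filter.mp ht').1).2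
    obtain ⟨ha, hb, _⟩ := hPt
    have ha' : (t.1 : ℕ) < t.2.1 := ha
    have hb' : (t.2.1 : ℕ) < t.2.2 := hb
    rcases Finset.mem_union.mp ht with h | h
    · have := (Finset.mem_filter.mp h).2; omega
    · have := (Finset.mem_filter.mp h).2
      have : (t.2.2 : ℕ) = k := congrArg Fin.val this
      omega
  have hcard : S.card = S₁.card + S₂.card + S₃.card := by
    rw [hsplit, Finset.card_union_of_disjoint hd3, Finset.card_union_of_disjoint hd12]
  -- S₁ = count123 π₁
  have hc1 : S₁.card = count123 (fun i : Fin (k:ℕ) => π ⟨i.1, lt_trans i.isLt k.isLt⟩) := by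
    rw [count123]
    refine Finset.card_bij'
      (i := fun t ht =>
        have h := Finset.mem_filter.mp ht
        have hPt : P t := (Finset.mem_filter.mp h.1).2
        ((⟨t.1.1, by have := hPt.1; have := hPt.2.1; have h2 := h.2; simp only [Fin.lt_def] at *; omega⟩ : Fin (k:ℕ)),
         (⟨t.2.1.1, by have := hPt.2.1; have h2 := h.2; simp only [Fin.lt_def] at *; omega⟩ : Fin (k:ℕ)),
         (⟨t.2.2.1, h.2⟩ : Fin (k:ℕ))))
      (j := fun t _ =>
        ((⟨t.1.1, lt_trans t.1.isLt k.isLt⟩ : Fin n),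
         (⟨t.2.1.1, lt_trans t.2.1.isLt k.isLt⟩ : Fin n),
         (⟨t.2.2.1, lt_trans t.2.2.isLt k.isLt⟩ : Fin n)))
      ?_ ?_ ?_ ?_
    · intro t ht
      have h := Finset.mem_filter.mp ht
      have hPt : P t := (Finset.mem_filter.mp h.1).2
      obtain ⟨h1, h2, h3, h4⟩ := hPt
      simp only [Finset.mem_filter, Finset.mem_univ, true_and, Fin.lt_def, Fin.eta]
      exact ⟨h1, h2, h3, h4⟩
    · intro t ht
      simp only [Finset.mem_filter, Finset.mem_univ, true_and, Fin.lt_def] at ht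
      simp only [hS₁, hS, Finset.mem_filter, Finset.mem_univ, true_and, hP, Fin.lt_def]
      exact ⟨⟨ht.1, ht.2.1, ht.2.2.1, ht.2.2.2⟩, t.2.2.isLt⟩
    · intro t ht; rfl
    · intro t ht; rfl
  -- S₃ = count123 π₂
  have hc3 : S₃.card = count123 (fun i : Fin (n - (k:ℕ) - 1) => π ⟨(k:ℕ) + 1 + i.1, by have := i.isLt; have := k.isLt; omega⟩) := by
    rw [count123]
    refine Finset.card_bij'
      (i := fun t ht =>
        have h := Finset.mem_filter.mp ht
        have hPt : P t := (Finset.mem_filter.mp h.1).2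
        ((⟨t.1.1 - (k:ℕ) - 1, by have h2 := h.2; have := t.1.isLt; simp only [Fin.lt_def] at *; omega⟩ : Fin (n - (k:ℕ) - 1)),
         (⟨t.2.1.1 - (k:ℕ) - 1, by have := hPt.1; have h2 := h.2; have := t.2.1.isLt; simp only [Fin.lt_def] at *; omega⟩ : Fin (n - (k:ℕ) - 1)),
         (⟨t.2.2.1 - (k:ℕ) - 1, by have := hPt.1; have := hPt.2.1; have h2 := h.2; have := t.2.2.isLt; simp only [Fin.lt_def] at *; omega⟩ : Fin (n - (k:ℕ) - 1))))
      (j := fun t _ =>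
        ((⟨(k:ℕ) + 1 + t.1.1, by have := t.1.isLt; have := k.isLt; omega⟩ : Fin n),
         (⟨(k:ℕ) + 1 + t.2.1.1, by have := t.2.1.isLt; have := k.isLt; omega⟩ : Fin n),
         (⟨(k:ℕ) + 1 + t.2.2.1, by have := t.2.2.isLt; have := k.isLt; omega⟩ : Fin n)))
      ?_ ?_ ?_ ?_
    · intro t ht
      have h := Finset.mem_filter.mp ht
      have hPt : P t := (Finset.mem_filter.mp h.1).2
      obtain ⟨h1, h2, h3, h4⟩ := hPt
      have h1' : (t.1 : ℕ) < t.2.1 := h1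
      have h2' : (t.2.1 : ℕ) < t.2.2 := h2
      have hk1 : (k:ℕ) < t.1.1 := h.2
      refine Finset.mem_filter.mpr ⟨Finset.mem_univ _, Fin.mk_lt_mk.mpr (by omega),
        Fin.mk_lt_mk.mpr (by omega), ?_, ?_⟩
      · convert h3 using 2 <;> exact Fin.ext (by simp only [Fin.val_mk]; omega)
      · convert h4 using 2 <;> exact Fin.ext (by simp only [Fin.val_mk]; omega)
    · intro t ht
      simp only [Finset.mem_filter, Finset.mem_univ, true_and, Fin.lt_def] at ht
      simp only [hS₃, hS, Finset.mem_filter, Finset.mem_univ, true_and, hP, Fin.lt_def]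
      refine ⟨⟨by omega, by omega, ht.2.2.1, ht.2.2.2⟩, by omega⟩
    · intro t ht
      have h := Finset.mem_filter.mp ht
      have hPt : P t := (Finset.mem_filter.mp h.1).2
      have h1' : (t.1 : ℕ) < t.2.1 := hPt.1
      have h2' : (t.2.1 : ℕ) < t.2.2 := hPt.2.1
      have hk1 : (k:ℕ) < t.1.1 := h.2
      dsimp only
      refine Prod.ext (Fin.ext ?_) (Prod.ext (Fin.ext ?_) (Fin.ext ?_)) <;> simp <;> omega
    · intro t ht
      dsimp only
      refine Prod.ext (Fin.ext ?_) (Prod.ext (Fin.ext ?_) (Fin.ext ?_)) <;> simp <;> omega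
  -- S₂ = count12 π₁
  have hc2 : S₂.card = count12 (fun i : Fin (k:ℕ) => π ⟨i.1, lt_trans i.isLt k.isLt⟩) := by
    rw [count12]
    refine Finset.card_bij'
      (i := fun t ht =>
        have h := Finset.mem_filter.mp ht
        have hPt : P t := (Finset.mem_filter.mp h.1).2
        ((⟨t.1.1, by have := hPt.1; have := hPt.2.1; have h2 := congrArg Fin.val h.2; simp only [Fin.lt_def] at *; omega⟩ : Fin (k:ℕ)),
         (⟨t.2.1.1, by have := hPt.2.1; have h2 := congrArg Fin.val h.2; simp only [Fin.lt_def] at *; omega⟩ : Fin (k:ℕ))))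
      (j := fun t _ =>
        ((⟨t.1.1, lt_trans t.1.isLt k.isLt⟩ : Fin n),
         (⟨t.2.1, lt_trans t.2.isLt k.isLt⟩ : Fin n), k))
      ?_ ?_ ?_ ?_
    · intro t ht
      have h := Finset.mem_filter.mp ht
      have hPt : P t := (Finset.mem_filter.mp h.1).2
      obtain ⟨h1, _, h3, _⟩ := hPt
      simp only [Finset.mem_filter, Finset.mem_univ, true_and, Fin.lt_def, Fin.eta]
      exact ⟨h1, h3⟩
    · intro t ht
      simp only [Finset.mem_filter, Finset.mem_univ, true_and, Fin.lt_def] at ht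
      simp only [hS₂, hS, Finset.mem_filter, Finset.mem_univ, true_and, hP, Fin.lt_def]
      refine ⟨⟨ht.1, t.2.isLt, ht.2, ?_⟩, by trivial⟩
      · rw [hk]
        exact hltn _ (fun h => by have := congrArg Fin.val h; simp at this; have := t.2.isLt; omega)
    · intro t ht
      have h := Finset.mem_filter.mp ht
      dsimp only
      exact Prod.ext (Fin.ext rfl) (Prod.ext (Fin.ext rfl) h.2.symm)
    · intro t ht; rfl
  rw [show count123 π = S.card from rfl, hcard, hc1, hc2, hc3]
  ring
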